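/- arXiv:1705.01193 — 2 statements merged into one kernel-verified Lean document; each statement's English description precedes it below -/
import Mathlib

section
/- Let f ∈ L¹(Ω,μ) and let f̃ be a boundary extension of f. Then for every integer j ≥ 0, ∫_{Γ_j} |f̃| dμ ≤ ( ∑_{i=0}^{j} (p+q)^i ) · ‖f‖_{L¹(Ω)}. -/
open MeasureTheory Set Filter Topology

/-- The measure `ℓ(·,v)` on `V` given by
`ℓ(dw,v) = p w v⁻¹ k(w,v) ν(dw) + q δ_v(dw)`. -/
noncomputable def ell (p q : ℝ) (k : ℝ → ℝ → ℝ) (ν : Measure ℝ) (V : Set ℝ) (v : ℝ) :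
    Measure ℝ :=
  (ν.restrict V).withDensity (fun w => ENNReal.ofReal (p * w * v⁻¹ * k w v)) +
    (ENNReal.ofReal q) • Measure.dirac v

/-- The sets `Ω₀ = Ω = (0,1) × V` and, for `i ≥ 1`,
`Ω_i = {(x,v) : v ∈ V, −i v b⁻¹ < x ≤ −(i−1) v b⁻¹}`. -/
def Omi (b : ℝ) (V : Set ℝ) : ℕ → Set (ℝ × ℝ)
  | 0 => (Set.Ioo (0 : ℝ) 1) ×ˢ V
  | (i + 1) =>
      {z : ℝ × ℝ | z.2 ∈ V ∧ -(((i : ℝ) + 1) * z.2 * b⁻¹) < z.1 ∧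
        z.1 ≤ -((i : ℝ) * z.2 * b⁻¹)}

/-- `Γ_j = ⋃_{i=0}^{j} Ω_i`. -/
def Gam (b : ℝ) (V : Set ℝ) (j : ℕ) : Set (ℝ × ℝ) :=
  ⋃ i ∈ Finset.range (j + 1), Omi b V i

/-- A measurable function `f̃ : Ω̃ → ℝ` (modelled on all of `ℝ × ℝ`, with
`Ω̃ = (−∞,1) × V`), μ-integrable on each `Γ_j`, is a boundary extension of `f` if
`f̃ = f` a.e. on `{x > 0}` and, a.e. on `{x ≤ 0}`, the function
`w ↦ f̃(1 + x w v⁻¹, w)` is `ℓ(·,v)`-integrable with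
`f̃(x,v) = ∫_V f̃(1 + x w v⁻¹, w) ℓ(dw,v)`. -/
def IsBoundaryExtension (b p q : ℝ) (k : ℝ → ℝ → ℝ) (ν : Measure ℝ) (V : Set ℝ)
    (f ftil : ℝ × ℝ → ℝ) : Prop :=
  Measurable ftil ∧
  (∀ j : ℕ, IntegrableOn ftil (Gam b V j) ((volume : Measure ℝ).prod ν)) ∧
  (∀ᵐ z ∂(((volume : Measure ℝ).prod ν).restrict ((Set.Iio (1 : ℝ)) ×ˢ V)),
    0 < z.1 → ftil z = f z) ∧
  (∀ᵐ z ∂(((volume : Measure ℝ).prod ν).restrict ((Set.Iio (1 : ℝ)) ×ˢ V)),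
    z.1 ≤ 0 →
      Integrable (fun w => ftil (1 + z.1 * w * z.2⁻¹, w)) (ell p q k ν V z.2) ∧
      ftil z = ∫ w, ftil (1 + z.1 * w * z.2⁻¹, w) ∂(ell p q k ν V z.2))

open scoped ENNReal

/-!
Write `F = ‖f̃‖ₑ`. For `x ≤ 0` the boundary relation and `‖∫ g‖ ≤ ∫ ‖g‖` give
`F(x,v) ≤ p ∫_V (w/v) k(w,v) F(1 + xw/v, w) dν(w) + q F(1 + x, v)`.
Each `Ω_i` with `i ≥ 1` is a ratio set `{(x,v) : v ∈ V, x/v ∈ S}`. On such a set the substitution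
`x ↦ xw/v` maps the `v`-section onto the `w`-section, so after Tonelli and `∫_V k(w,·) dν = 1`
the integral of the first term equals `p ∫ F(1 + x, v)`. Translating by `1` maps
`Γ_{j+1} \ Ω` into `Γ_j ∪ {x = 1}` because `v < b`, which gives
`∫_{Γ_{j+1}} F ≤ ‖f‖₁ + (p+q) ∫_{Γ_j} F`; iterating yields the geometric sum.
-/

def ratioSet (V S : Set ℝ) : Set (ℝ × ℝ) := {z | z.2 ∈ V ∧ z.1 / z.2 ∈ S}

lemma measurableSet_ratioSet {V S : Set ℝ} (hV : MeasurableSet V) (hS : MeasurableSet S) :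
    MeasurableSet (ratioSet V S) :=
  (hV.preimage measurable_snd).inter (hS.preimage (by fun_prop))

lemma setLIntegral_comp_mul_right {c : ℝ} (hc : 0 < c) (h : ℝ → ℝ≥0∞) (t : Set ℝ) :
    ∫⁻ x in (· * c) ⁻¹' t, ENNReal.ofReal c * h (x * c) = ∫⁻ y in t, h y := by
  have hmp : MeasurePreserving (· * c) (ENNReal.ofReal c • volume) volume := by
    refine ⟨by fun_prop, ?_⟩
    rw [Measure.map_smul, Real.map_volume_mul_right hc.ne', smul_smul,
      ← ENNReal.ofReal_mul hc.le, abs_of_pos (inv_pos.2 hc), mul_inv_cancel₀ hc.ne',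
      ENNReal.ofReal_one, one_smul]
  rw [lintegral_const_mul' _ _ ENNReal.ofReal_ne_top, ← smul_eq_mul, ← lintegral_smul_measure,
    ← Measure.restrict_smul]
  exact hmp.setLIntegral_comp_preimage_emb (Homeomorph.mulRight₀ c hc.ne').measurableEmbedding h t

lemma setLIntegral_ratioSet_eq {ν : Measure ℝ} [SigmaFinite ν] {V S : Set ℝ}
    (hS : MeasurableSet S) {g : ℝ × ℝ → ℝ≥0∞} (hg : Measurable g) :
    ∫⁻ z in ratioSet V S, g z ∂(volume.prod ν)
      = ∫⁻ v in V, ∫⁻ x in (· / v) ⁻¹' S, g (x, v) ∂volume ∂ν := by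
  have hD : MeasurableSet {z : ℝ × ℝ | z.1 / z.2 ∈ S} := hS.preimage (by fun_prop)
  have hset : ratioSet V S = {z : ℝ × ℝ | z.1 / z.2 ∈ S} ∩ (univ ×ˢ V) := by
    ext z; simp [ratioSet, and_comm]
  rw [hset, ← Measure.restrict_restrict hD, ← Measure.prod_restrict,
    Measure.restrict_univ, ← lintegral_indicator hD,
    lintegral_prod_symm _ (hg.indicator hD).aemeasurable]
  refine lintegral_congr fun v => ?_
  rw [← lintegral_indicator (hS.preimage (by fun_prop))]
  rfl

lemma lintegral_ofReal_eq_one_of_integral_eq_one {α : Type*} [MeasurableSpace α]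
    {μ : Measure α} {f : α → ℝ} (hf : 0 ≤ᵐ[μ] f) (h : ∫ x, f x ∂μ = 1) :
    ∫⁻ x, ENNReal.ofReal (f x) ∂μ = 1 := by
  rw [← ofReal_integral_eq_lintegral_ofReal (Integrable.of_integral_ne_zero (by simp [h])) hf, h,
    ENNReal.ofReal_one]

lemma measurable_setLIntegral_div_preimage {S : Set ℝ} (hS : MeasurableSet S)
    {g : ℝ × ℝ → ℝ≥0∞} (hg : Measurable g) :
    Measurable fun w => ∫⁻ y in (· / w) ⁻¹' S, g (y, w) := by
  have hD : MeasurableSet {z : ℝ × ℝ | z.1 / z.2 ∈ S} := hS.preimage (by fun_prop)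
  convert (hg.indicator hD).lintegral_prod_left' (μ := volume) using 2 with w
  rw [← lintegral_indicator (hS.preimage (by fun_prop))]
  rfl

lemma setLIntegral_ratioSet_kernel {ν : Measure ℝ} [SigmaFinite ν] {V S : Set ℝ}
    (hVpos : V ⊆ Ioi 0) (hV : MeasurableSet V) (hS : MeasurableSet S) {k : ℝ → ℝ → ℝ}
    (hk : Measurable (Function.uncurry k))
    (hk1 : ∀ w ∈ V, ∫⁻ v in V, ENNReal.ofReal (k w v) ∂ν = 1)
    {g : ℝ × ℝ → ℝ≥0∞} (hg : Measurable g) :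
    ∫⁻ z in ratioSet V S, ∫⁻ w in V,
        ENNReal.ofReal (w * z.2⁻¹ * k w z.2) * g (z.1 * w * z.2⁻¹, w) ∂ν ∂(volume.prod ν)
      = ∫⁻ z in ratioSet V S, g z ∂(volume.prod ν) := by
  have hk' : Measurable fun p : ℝ × ℝ => k p.1 p.2 := hk
  have hI := measurable_setLIntegral_div_preimage hS hg
  rw [setLIntegral_ratioSet_eq hS (by fun_prop), setLIntegral_ratioSet_eq hS hg]
  calc ∫⁻ v in V, ∫⁻ x in (· / v) ⁻¹' S, ∫⁻ w in V,
          ENNReal.ofReal (w * v⁻¹ * k w v) * g (x * w * v⁻¹, w) ∂ν ∂volume ∂ν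
      = ∫⁻ v in V, ∫⁻ w in V,
          ENNReal.ofReal (k w v) * ∫⁻ y in (· / w) ⁻¹' S, g (y, w) ∂volume ∂ν ∂ν := by
        refine setLIntegral_congr_fun hV fun v hv => ?_
        rw [lintegral_lintegral_swap (by fun_prop)]
        refine setLIntegral_congr_fun hV fun w hw => ?_
        have hv0 : 0 < v := hVpos hv
        have hw0 : 0 < w := hVpos hw
        have hc : 0 < w * v⁻¹ := by positivity
        have hpre : (· * (w * v⁻¹)) ⁻¹' ((· / w) ⁻¹' S) = (· / v) ⁻¹' S := by
          ext x; simp only [mem_preimage]; congr! 1; field_simp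
        rw [← setLIntegral_comp_mul_right hc (fun y => g (y, w)) ((· / w) ⁻¹' S), hpre,
          ← lintegral_const_mul' _ _ ENNReal.ofReal_ne_top]
        refine lintegral_congr fun x => ?_
        rw [ENNReal.ofReal_mul hc.le, mul_assoc x]
        ring
    _ = ∫⁻ w in V, ∫⁻ v in V,
          ENNReal.ofReal (k w v) * ∫⁻ y in (· / w) ⁻¹' S, g (y, w) ∂volume ∂ν ∂ν :=
        lintegral_lintegral_swap
          ((hk'.comp measurable_swap).ennreal_ofReal.mul (hI.comp measurable_snd)).aemeasurable
    _ = ∫⁻ w in V, ∫⁻ y in (· / w) ⁻¹' S, g (y, w) ∂volume ∂ν := by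
        refine setLIntegral_congr_fun hV fun w hw => ?_
        rw [lintegral_mul_const _ (by fun_prop), hk1 w hw, one_mul]

lemma lintegral_ell {p q : ℝ} (hp : 0 ≤ p) {k : ℝ → ℝ → ℝ} (hk : Measurable (Function.uncurry k))
    (ν : Measure ℝ) (V : Set ℝ) (v : ℝ) {G : ℝ → ℝ≥0∞} (hG : Measurable G) :
    ∫⁻ w, G w ∂(ell p q k ν V v)
      = ENNReal.ofReal p * ∫⁻ w in V, ENNReal.ofReal (w * v⁻¹ * k w v) * G w ∂ν
        + ENNReal.ofReal q * G v := by
  have hk' : Measurable fun p : ℝ × ℝ => k p.1 p.2 := hk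
  rw [ell, lintegral_add_measure, lintegral_withDensity_eq_lintegral_mul _ (by fun_prop) hG,
    lintegral_smul_measure, lintegral_dirac, ← lintegral_const_mul' _ _ ENNReal.ofReal_ne_top]
  congr 1
  refine lintegral_congr fun w => ?_
  rw [Pi.mul_apply, ← mul_assoc, ← ENNReal.ofReal_mul hp]
  ring_nf

lemma ratioSet_union (V S T : Set ℝ) : ratioSet V S ∪ ratioSet V T = ratioSet V (S ∪ T) := by
  ext z; simp only [ratioSet, mem_union, mem_ofPred_eq, and_or_left]

lemma omi_succ_eq_ratioSet {b : ℝ} {V : Set ℝ} (hV : V ⊆ Ioi 0) (n : ℕ) :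
    Omi b V (n + 1) = ratioSet V (Ioc (-((n + 1) * b⁻¹)) (-(n * b⁻¹))) := by
  ext ⟨x, v⟩
  simp only [Omi, ratioSet, mem_ofPred_eq, mem_Ioc]
  refine and_congr_right fun hv => ?_
  have hv0 : 0 < v := hV hv
  rw [lt_div_iff₀ hv0, div_le_iff₀ hv0]
  constructor <;> rintro ⟨h1, h2⟩ <;> constructor <;> linarith

lemma gam_succ (b : ℝ) (V : Set ℝ) (j : ℕ) : Gam b V (j + 1) = Gam b V j ∪ Omi b V (j + 1) := by
  rw [Gam, Finset.range_add_one, Finset.set_biUnion_insert, union_comm, Gam]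

lemma gam_eq_union {b : ℝ} (hb : 0 ≤ b) {V : Set ℝ} (hV : V ⊆ Ioi 0) (j : ℕ) :
    Gam b V j = Omi b V 0 ∪ ratioSet V (Ioc (-(j * b⁻¹)) 0) := by
  induction j with
  | zero => simp [Gam, ratioSet]
  | succ j ih =>
    have hj : -(((j : ℝ) + 1) * b⁻¹) ≤ -(j * b⁻¹) := by
      have := inv_nonneg.2 hb; nlinarith
    rw [gam_succ, ih, omi_succ_eq_ratioSet hV, union_assoc, union_comm (ratioSet _ _),
      ratioSet_union, Ioc_union_Ioc_eq_Ioc hj (neg_nonpos.2 (by positivity))]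
    push_cast
    rfl

lemma fst_nonpos_of_mem_ratioSet {V S : Set ℝ} (hV : V ⊆ Ioi 0) (hS : S ⊆ Iic 0) {z : ℝ × ℝ}
    (hz : z ∈ ratioSet V S) : z.1 ≤ 0 := by
  have hdiv : z.1 / z.2 ≤ 0 := hS hz.2
  simpa using (div_le_iff₀ (hV hz.1)).1 hdiv

lemma disjoint_omi_zero_ratioSet {b : ℝ} {V S : Set ℝ} (hV : V ⊆ Ioi 0) (hS : S ⊆ Iic 0) :
    Disjoint (Omi b V 0) (ratioSet V S) :=
  disjoint_left.2 fun _ hz hz' => (fst_nonpos_of_mem_ratioSet hV hS hz').not_gt hz.1.1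

lemma image_shift_ratioSet_subset {b : ℝ} {V : Set ℝ} (hV : V ⊆ Ioo 0 b) (j : ℕ) :
    Prod.map (1 + ·) id '' ratioSet V (Ioc (-((j + 1) * b⁻¹)) 0)
      ⊆ Gam b V j ∪ Prod.fst ⁻¹' {1} := by
  rintro _ ⟨⟨x, v⟩, ⟨hv, h1, h2⟩, rfl⟩
  dsimp only at hv h1 h2
  show (1 + x, v) ∈ _
  obtain ⟨hv0, hvb⟩ := hV hv
  have hb : 0 < b := hv0.trans hvb
  rw [gam_eq_union hb.le (fun w hw => (hV hw).1)]
  rw [lt_div_iff₀ hv0] at h1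
  have hx : x ≤ 0 := by simpa using (div_le_iff₀ hv0).1 h2
  rcases le_or_gt (1 + x) 0 with hneg | hpos
  · refine Or.inl (Or.inr ⟨hv, ?_, div_nonpos_of_nonpos_of_nonneg hneg hv0.le⟩)
    have hvb' : v * b⁻¹ < 1 := by rwa [← div_eq_mul_inv, div_lt_one hb]
    rw [lt_div_iff₀ hv0]
    push_cast
    nlinarith
  rcases hx.lt_or_eq with hx | rfl
  · exact Or.inl (Or.inl ⟨⟨hpos, by linarith⟩, hv⟩)
  · exact Or.inr (add_zero 1)

lemma setLIntegral_shift_ratioSet_le {ν : Measure ℝ} [SigmaFinite ν] {b : ℝ} {V : Set ℝ}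
    (hV : V ⊆ Ioo 0 b) (F : ℝ × ℝ → ℝ≥0∞) (j : ℕ) :
    ∫⁻ z in ratioSet V (Ioc (-((j + 1) * b⁻¹)) 0), F (1 + z.1, z.2) ∂(volume.prod ν)
      ≤ ∫⁻ z in Gam b V j, F z ∂(volume.prod ν) := by
  have hshift : MeasurePreserving (Prod.map ((1 : ℝ) + ·) id) (volume.prod ν) (volume.prod ν) :=
    (measurePreserving_add_left (volume : Measure ℝ) 1).prod (MeasurePreserving.id ν)
  have hnull : (volume.prod ν) (Prod.fst ⁻¹' {(1 : ℝ)}) = 0 := by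
    rw [← prod_univ, Measure.prod_prod, Real.volume_singleton, zero_mul]
  calc ∫⁻ z in ratioSet V (Ioc (-((j + 1) * b⁻¹)) 0), F (1 + z.1, z.2) ∂(volume.prod ν)
      = ∫⁻ z in Prod.map ((1 : ℝ) + ·) id '' ratioSet V (Ioc (-((j + 1) * b⁻¹)) 0), F z
          ∂(volume.prod ν) :=
        hshift.setLIntegral_comp_emb
          ((Homeomorph.addLeft (1 : ℝ)).measurableEmbedding.prodMap MeasurableEmbedding.id)
          F _
    _ ≤ ∫⁻ z in Gam b V j ∪ Prod.fst ⁻¹' {1}, F z ∂(volume.prod ν) :=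
        lintegral_mono_set (image_shift_ratioSet_subset hV j)
    _ ≤ ∫⁻ z in Gam b V j, F z ∂(volume.prod ν) := by
        grw [lintegral_union_le, setLIntegral_measure_zero _ _ hnull, add_zero]

lemma le_geom_sum_mul_of_le_add_mul {R : Type*} [Semiring R] [PartialOrder R] [IsOrderedRing R]
    {c L : R} (hc : 0 ≤ c) {T : ℕ → R} (h0 : T 0 ≤ L) (hsucc : ∀ j, T (j + 1) ≤ L + c * T j)
    (j : ℕ) : T j ≤ (∑ i ∈ Finset.range (j + 1), c ^ i) * L := by
  induction j with
  | zero => simpa using h0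
  | succ j ih =>
    calc T (j + 1) ≤ L + c * T j := hsucc j
      _ ≤ L + c * ((∑ i ∈ Finset.range (j + 1), c ^ i) * L) := by gcongr
      _ = (∑ i ∈ Finset.range (j + 1 + 1), c ^ i) * L := by
        rw [geom_sum_succ (n := j + 1), add_mul, one_mul, mul_assoc, add_comm]

namespace IsBoundaryExtension

variable {b p q : ℝ} {k : ℝ → ℝ → ℝ} {ν : Measure ℝ} {V : Set ℝ}
  {f ftil : ℝ × ℝ → ℝ}

lemma setLIntegral_omi_zero (hext : IsBoundaryExtension b p q k ν V f ftil)
    (hVm : MeasurableSet V) :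
    ∫⁻ z in Omi b V 0, ‖ftil z‖ₑ ∂(volume.prod ν)
      = ∫⁻ z in Ioo 0 1 ×ˢ V, ‖f z‖ₑ ∂(volume.prod ν) := by
  have hfeq := (ae_restrict_iff' (measurableSet_Iio.prod hVm)).1 hext.2.2.1
  refine setLIntegral_congr_fun_ae (measurableSet_Ioo.prod hVm) ?_
  filter_upwards [hfeq] with z hz hzΩ
  rw [hz ⟨hzΩ.1.2, hzΩ.2⟩ hzΩ.1.1]

lemma setLIntegral_ratioSet_le [SigmaFinite ν] (hext : IsBoundaryExtension b p q k ν V f ftil)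
    (hp : 0 ≤ p) (hq : 0 ≤ q) (hV : V ⊆ Ioi 0) (hVm : MeasurableSet V)
    (hkm : Measurable (Function.uncurry k)) (hknn : ∀ w v : ℝ, 0 ≤ k w v)
    (hk1 : ∀ w ∈ V, ∫ v in V, k w v ∂ν = 1) {S : Set ℝ} (hS : MeasurableSet S)
    (hS0 : S ⊆ Iic 0) :
    ∫⁻ z in ratioSet V S, ‖ftil z‖ₑ ∂(volume.prod ν)
      ≤ ENNReal.ofReal (p + q)
          * ∫⁻ z in ratioSet V S, ‖ftil (1 + z.1, z.2)‖ₑ ∂(volume.prod ν) := by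
  have hftm := hext.1
  have hR := measurableSet_ratioSet hVm hS
  have hRsub : ratioSet V S ⊆ Iio 1 ×ˢ V := fun z hz =>
    ⟨(fst_nonpos_of_mem_ratioSet hV hS0 hz).trans_lt one_pos, hz.1⟩
  have hpt : ∀ᵐ z ∂(volume.prod ν).restrict (ratioSet V S), ‖ftil z‖ₑ
      ≤ ENNReal.ofReal p * ∫⁻ w in V,
          ENNReal.ofReal (w * z.2⁻¹ * k w z.2) * ‖ftil (1 + z.1 * w * z.2⁻¹, w)‖ₑ ∂ν
        + ENNReal.ofReal q * ‖ftil (1 + z.1, z.2)‖ₑ := by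
    filter_upwards [ae_restrict_of_ae_restrict_of_subset hRsub hext.2.2.2, ae_restrict_mem hR]
      with z hz hzR
    rw [(hz (fst_nonpos_of_mem_ratioSet hV hS0 hzR)).2]
    refine (enorm_integral_le_lintegral_enorm _).trans_eq ?_
    rw [lintegral_ell hp hkm ν V z.2 (by fun_prop), mul_inv_cancel_right₀ (hV hzR.1).ne']
  have hk1' : ∀ w ∈ V, ∫⁻ v in V, ENNReal.ofReal (k w v) ∂ν = 1 := fun w hw =>
    lintegral_ofReal_eq_one_of_integral_eq_one (ae_of_all _ (hknn w)) (hk1 w hw)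
  calc ∫⁻ z in ratioSet V S, ‖ftil z‖ₑ ∂(volume.prod ν)
      ≤ ∫⁻ z in ratioSet V S, (ENNReal.ofReal p * ∫⁻ w in V,
          ENNReal.ofReal (w * z.2⁻¹ * k w z.2) * ‖ftil (1 + z.1 * w * z.2⁻¹, w)‖ₑ ∂ν
        + ENNReal.ofReal q * ‖ftil (1 + z.1, z.2)‖ₑ) ∂(volume.prod ν) := lintegral_mono_ae hpt
    _ = ENNReal.ofReal (p + q)
          * ∫⁻ z in ratioSet V S, ‖ftil (1 + z.1, z.2)‖ₑ ∂(volume.prod ν) := by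
      rw [lintegral_add_right _ (by fun_prop), lintegral_const_mul' _ _ ENNReal.ofReal_ne_top,
        lintegral_const_mul' _ _ ENNReal.ofReal_ne_top,
        setLIntegral_ratioSet_kernel hV hVm hS hkm hk1' (g := fun z => ‖ftil (1 + z.1, z.2)‖ₑ)
          (by fun_prop), ENNReal.ofReal_add hp hq, add_mul]

lemma setLIntegral_gam_succ_le [SigmaFinite ν] (hext : IsBoundaryExtension b p q k ν V f ftil)
    (hp : 0 ≤ p) (hq : 0 ≤ q) (hb : 0 ≤ b) (hV : V ⊆ Ioo 0 b) (hVm : MeasurableSet V)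
    (hkm : Measurable (Function.uncurry k)) (hknn : ∀ w v : ℝ, 0 ≤ k w v)
    (hk1 : ∀ w ∈ V, ∫ v in V, k w v ∂ν = 1) (j : ℕ) :
    ∫⁻ z in Gam b V (j + 1), ‖ftil z‖ₑ ∂(volume.prod ν)
      ≤ ∫⁻ z in Ioo 0 1 ×ˢ V, ‖f z‖ₑ ∂(volume.prod ν)
        + ENNReal.ofReal (p + q) * ∫⁻ z in Gam b V j, ‖ftil z‖ₑ ∂(volume.prod ν) := by
  have hV0 : V ⊆ Ioi 0 := fun v hv => (hV hv).1
  have hS0 : Ioc (-(((j + 1 : ℕ) : ℝ) * b⁻¹)) 0 ⊆ Iic 0 := Ioc_subset_Iic_self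
  rw [gam_eq_union hb hV0, lintegral_union (measurableSet_ratioSet hVm measurableSet_Ioc)
    (disjoint_omi_zero_ratioSet hV0 hS0), hext.setLIntegral_omi_zero hVm]
  refine add_le_add le_rfl
    ((hext.setLIntegral_ratioSet_le hp hq hV0 hVm hkm hknn hk1 measurableSet_Ioc hS0).trans ?_)
  gcongr _ * ?_
  exact_mod_cast setLIntegral_shift_ratioSet_le hV _ j

end IsBoundaryExtension

theorem stmt2_general
    (a b p q : ℝ) (ha : 0 ≤ a) (hab : a < b)
    (hp : 0 ≤ p) (hq : 0 ≤ q)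
    (V : Set ℝ) (hV : V ⊆ Set.Ioo a b) (hVm : MeasurableSet V)
    (ν : Measure ℝ) [SigmaFinite ν]
    (k : ℝ → ℝ → ℝ) (hkm : Measurable (Function.uncurry k))
    (hknn : ∀ w v : ℝ, 0 ≤ k w v)
    (hk1 : ∀ w ∈ V, ∫ v in V, k w v ∂ν = 1)
    (f ftil : ℝ × ℝ → ℝ)
    (hf : IntegrableOn f ((Set.Ioo (0 : ℝ) 1) ×ˢ V) ((volume : Measure ℝ).prod ν))
    (hext : IsBoundaryExtension b p q k ν V f ftil)
    (j : ℕ) :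
    ∫ z in Gam b V j, |ftil z| ∂((volume : Measure ℝ).prod ν)
      ≤ (∑ i ∈ Finset.range (j + 1), (p + q) ^ i) *
        ∫ z in (Set.Ioo (0 : ℝ) 1) ×ˢ V, |f z| ∂((volume : Measure ℝ).prod ν) := by
  have hV0b : V ⊆ Ioo 0 b := fun v hv => ⟨ha.trans_lt (hV hv).1, (hV hv).2⟩
  have hGam0 : Gam b V 0 = Omi b V 0 := by simp [Gam]
  have hlint := le_geom_sum_mul_of_le_add_mul
    (T := fun j => ∫⁻ z in Gam b V j, ‖ftil z‖ₑ ∂(volume.prod ν)) zero_le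
    (hGam0 ▸ hext.setLIntegral_omi_zero hVm).le
    (hext.setLIntegral_gam_succ_le hp hq (ha.trans hab.le) hV0b hVm hkm hknn hk1) j
  simp_rw [← Real.norm_eq_abs]
  rw [integral_norm_eq_lintegral_enorm hext.1.aestronglyMeasurable.restrict,
    integral_norm_eq_lintegral_enorm hf.1]
  have hpow : ∀ i : ℕ, ENNReal.ofReal (p + q) ^ i ≠ ∞ := fun i =>
    ENNReal.pow_ne_top ENNReal.ofReal_ne_top
  refine (ENNReal.toReal_mono (ENNReal.mul_ne_top (ENNReal.sum_ne_top.2 fun i _ => hpow i)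
    hf.2.ne) hlint).trans_eq ?_
  rw [ENNReal.toReal_mul, ENNReal.toReal_sum fun i _ => hpow i]
  simp_rw [ENNReal.toReal_pow, ENNReal.toReal_ofReal (add_nonneg hp hq)]

theorem stmt2
    (a b p q : ℝ) (ha : 0 ≤ a) (hab : a < b)
    (hp : 0 ≤ p) (hq : 0 ≤ q) (hpq : 0 < p + q)
    (V : Set ℝ) (hV : V ⊆ Set.Ioo a b) (hVm : MeasurableSet V)
    (ν : Measure ℝ) [SigmaFinite ν]
    (k : ℝ → ℝ → ℝ) (hkm : Measurable (Function.uncurry k))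
    (hknn : ∀ w v : ℝ, 0 ≤ k w v)
    (hk1 : ∀ w ∈ V, ∫ v in V, k w v ∂ν = 1)
    (f ftil : ℝ × ℝ → ℝ)
    (hf : IntegrableOn f ((Set.Ioo (0 : ℝ) 1) ×ˢ V) ((volume : Measure ℝ).prod ν))
    (hext : IsBoundaryExtension b p q k ν V f ftil)
    (j : ℕ) :
    ∫ z in Gam b V j, |ftil z| ∂((volume : Measure ℝ).prod ν)
      ≤ (∑ i ∈ Finset.range (j + 1), (p + q) ^ i) *
        ∫ z in (Set.Ioo (0 : ℝ) 1) ×ˢ V, |f z| ∂((volume : Measure ℝ).prod ν) :=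
  stmt2_general a b p q ha hab hp hq V hV hVm ν k hkm hknn hk1 f ftil hf hext j
end

section
/- Let f ∈ L¹(Ω,μ) have boundary extension f̃, and let t ≥ 0. Then the function g : Ω → ℝ defined by g(x,v) = f̃(x − tv, v) belongs to L¹(Ω,μ), and the function g̃ : Ω̃ → ℝ defined by g̃(x,v) = f̃(x − tv, v) is a boundary extension of g. -/
open MeasureTheory Set Filter Topology

/-! The shear `(x, v) ↦ (x - t v, v)` is the free transport along characteristics for time `t`.
It preserves `leb × ν`, maps `Γ_j` into `Γ_{j + ⌈t b⌉}` and `{x ≤ 0}` into itself, and turns the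
boundary relation at `(x - t v, v)` into the one for the transported function at `(x, v)`, since
`1 + (x - t v) w v⁻¹ = (1 + x w v⁻¹) - t w`. -/

lemma MeasureTheory.MeasurePreserving.integrableOn_comp_of_mapsTo
    {α β E : Type*} [MeasurableSpace α] [MeasurableSpace β] [NormedAddCommGroup E]
    {μ : Measure α} {ν : Measure β} {T : α → β} (hT : MeasurePreserving T μ ν)
    {s : Set β} (hs : MeasurableSet s) {A : Set α} (hA : MapsTo T A s) {g : β → E}
    (hg : IntegrableOn g s ν) : IntegrableOn (g ∘ T) A μ :=
  IntegrableOn.mono_set ((hT.restrict_preimage hs).integrable_comp_of_integrable hg) hA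

lemma MeasureTheory.MeasurePreserving.ae_restrict_comp_of_mapsTo
    {α β : Type*} [MeasurableSpace α] [MeasurableSpace β]
    {μ : Measure α} {ν : Measure β} {T : α → β} (hT : MeasurePreserving T μ ν)
    {s : Set β} (hs : MeasurableSet s) {A : Set α} (hA : MapsTo T A s) {P : β → Prop}
    (hP : ∀ᵐ y ∂ν.restrict s, P y) : ∀ᵐ x ∂μ.restrict A, P (T x) :=
  ae_restrict_of_ae_restrict_of_subset hA
    ((hT.restrict_preimage hs).quasiMeasurePreserving.ae hP)

lemma measurePreserving_shear (ν : Measure ℝ) [SFinite ν] (t : ℝ) :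
    MeasurePreserving (fun z : ℝ × ℝ => (z.1 - t * z.2, z.2))
      ((volume : Measure ℝ).prod ν) ((volume : Measure ℝ).prod ν) := by
  have hskew : MeasurePreserving (fun z : ℝ × ℝ => (z.1, z.2 - t * z.1))
      (ν.prod volume) (ν.prod volume) :=
    (MeasurePreserving.id ν).skew_product (g := fun v x => x - t * v) (by fun_prop)
      (ae_of_all _ fun v => by
        simpa [sub_eq_add_neg] using map_add_right_eq_self (volume : Measure ℝ) (-(t * v)))
  exact Measure.measurePreserving_swap.comp (hskew.comp Measure.measurePreserving_swap)

lemma neg_mul_mul_inv_lt_iff {b v : ℝ} (hb : 0 < b) (hv : 0 < v) (c x : ℝ) :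
    -(c * v * b⁻¹) < x ↔ -x * b / v < c := by
  rw [neg_lt, lt_mul_inv_iff₀ hb, div_lt_iff₀ hv]

lemma measurableSet_Omi (b : ℝ) {V : Set ℝ} (hV : MeasurableSet V) (i : ℕ) :
    MeasurableSet (Omi b V i) := by
  cases i with
  | zero => exact measurableSet_Ioo.prod hV
  | succ i =>
    exact (measurable_snd hV).inter ((measurableSet_lt (by fun_prop) measurable_fst).inter
      (measurableSet_le measurable_fst (by fun_prop)))

lemma measurableSet_Gam (b : ℝ) {V : Set ℝ} (hV : MeasurableSet V) (j : ℕ) :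
    MeasurableSet (Gam b V j) :=
  .biUnion (Finset.range (j + 1)).countable_toSet fun i _ => measurableSet_Omi b hV i

lemma Gam_zero (b : ℝ) (V : Set ℝ) : Gam b V 0 = Ioo (0 : ℝ) 1 ×ˢ V := by
  simp [Gam, Omi]

/-- `-x b / v` measures how many layers `Ω_i` lie between `(x, v)` and the boundary `x = 0`. -/
lemma mem_Gam_iff {b : ℝ} (hb : 0 < b) {V : Set ℝ} (hV : ∀ v ∈ V, 0 < v) {n : ℕ}
    {z : ℝ × ℝ} : z ∈ Gam b V n ↔ z.2 ∈ V ∧ z.1 < 1 ∧ -z.1 * b / z.2 < n := by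
  simp only [Gam, mem_iUnion, Finset.mem_range, exists_prop]
  constructor
  · rintro ⟨i, hi, hz⟩
    cases i with
    | zero =>
      obtain ⟨⟨hx0, hx1⟩, hv⟩ := hz
      have hneg : -z.1 * b / z.2 < 0 := div_neg_of_neg_of_pos (by nlinarith) (hV _ hv)
      exact ⟨hv, hx1, hneg.trans_le n.cast_nonneg⟩
    | succ i =>
      obtain ⟨hv, hlt, hle⟩ := hz
      rw [neg_mul_mul_inv_lt_iff hb (hV _ hv)] at hlt
      have hle0 : -((i : ℝ) * z.2 * b⁻¹) ≤ 0 := by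
        have := hV _ hv
        simp only [neg_nonpos]
        positivity
      have hin : (i : ℝ) + 1 ≤ n := by exact_mod_cast Nat.lt_succ_iff.mp hi
      exact ⟨hv, by linarith, hlt.trans_le hin⟩
  · rintro ⟨hv, hx1, hs⟩
    by_cases hx : 0 < z.1
    · exact ⟨0, n.succ_pos, ⟨hx, hx1⟩, hv⟩
    have hs0 : 0 ≤ -z.1 * b / z.2 :=
      div_nonneg (mul_nonneg (neg_nonneg.2 (not_lt.1 hx)) hb.le) (hV _ hv).le
    refine ⟨⌊-z.1 * b / z.2⌋₊ + 1, by have := (Nat.floor_lt hs0).2 hs; omega, hv, ?_, ?_⟩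
    · rw [neg_mul_mul_inv_lt_iff hb (hV _ hv)]
      exact_mod_cast Nat.lt_floor_add_one _
    · rw [← not_lt, neg_mul_mul_inv_lt_iff hb (hV _ hv), not_lt]
      exact Nat.floor_le hs0

lemma mapsTo_shear_Gam {b : ℝ} (hb : 0 < b) {V : Set ℝ} (hV : ∀ v ∈ V, 0 < v) {t : ℝ}
    (ht : 0 ≤ t) (j : ℕ) :
    MapsTo (fun z : ℝ × ℝ => (z.1 - t * z.2, z.2)) (Gam b V j) (Gam b V (j + ⌈t * b⌉₊)) := by
  intro z hz
  rw [mem_Gam_iff hb hV] at hz ⊢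
  obtain ⟨hv, hx1, hs⟩ := hz
  have hv0 := hV _ hv
  have hshift : -(z.1 - t * z.2) * b / z.2 = -z.1 * b / z.2 + t * b := by
    field_simp
    ring
  refine ⟨hv, by nlinarith, ?_⟩
  rw [hshift]
  push_cast
  linarith [Nat.le_ceil (t * b)]

lemma mapsTo_shear_Iio_prod {V : Set ℝ} (hV : ∀ v ∈ V, 0 < v) {t : ℝ} (ht : 0 ≤ t) (c : ℝ) :
    MapsTo (fun z : ℝ × ℝ => (z.1 - t * z.2, z.2)) (Iio c ×ˢ V) (Iio c ×ˢ V) := by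
  rintro z ⟨hx, hv⟩
  exact ⟨show z.1 - t * z.2 < c by nlinarith [hV _ hv, mem_Iio.1 hx], hv⟩

lemma boundary_arg_shear {v : ℝ} (hv : v ≠ 0) (t x w : ℝ) :
    1 + (x - t * v) * w * v⁻¹ = 1 + x * w * v⁻¹ - t * w := by
  field_simp
  ring

theorem stmt6_general
    (a b p q : ℝ) (ha : 0 ≤ a) (hab : a < b)
    (V : Set ℝ) (hV : V ⊆ Set.Ioo a b) (hVm : MeasurableSet V)
    (ν : Measure ℝ) [SigmaFinite ν]
    (k : ℝ → ℝ → ℝ)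
    (f ftil : ℝ × ℝ → ℝ)
    (hext : IsBoundaryExtension b p q k ν V f ftil)
    (t : ℝ) (ht : 0 ≤ t) :
    IntegrableOn (fun z : ℝ × ℝ => ftil (z.1 - t * z.2, z.2))
        ((Set.Ioo (0 : ℝ) 1) ×ˢ V) ((volume : Measure ℝ).prod ν) ∧
    IsBoundaryExtension b p q k ν V
      (fun z : ℝ × ℝ => ftil (z.1 - t * z.2, z.2))
      (fun z : ℝ × ℝ => ftil (z.1 - t * z.2, z.2)) := by
  have hb : 0 < b := ha.trans_lt hab
  have hV₀ : ∀ v ∈ V, 0 < v := fun v hv => ha.trans_lt (hV hv).1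
  obtain ⟨hm, hint, -, hbd⟩ := hext
  have hT := measurePreserving_shear ν t
  have hGam : ∀ j, IntegrableOn (fun z : ℝ × ℝ => ftil (z.1 - t * z.2, z.2)) (Gam b V j)
      ((volume : Measure ℝ).prod ν) := fun j =>
    hT.integrableOn_comp_of_mapsTo (measurableSet_Gam b hVm _) (mapsTo_shear_Gam hb hV₀ ht j)
      (hint _)
  refine ⟨Gam_zero b V ▸ hGam 0, hm.comp (by fun_prop), hGam, ae_of_all _ fun _ _ => rfl, ?_⟩
  have hS : MeasurableSet (Iio (1 : ℝ) ×ˢ V) := measurableSet_Iio.prod hVm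
  filter_upwards [hT.ae_restrict_comp_of_mapsTo hS (mapsTo_shear_Iio_prod hV₀ ht 1) hbd,
    ae_restrict_mem hS] with z hz hzS hx
  have hv := hV₀ _ hzS.2
  simpa only [boundary_arg_shear hv.ne'] using hz (by nlinarith : z.1 - t * z.2 ≤ 0)

theorem stmt6
    (a b p q : ℝ) (ha : 0 ≤ a) (hab : a < b)
    (hp : 0 ≤ p) (hq : 0 ≤ q) (hpq : 0 < p + q)
    (V : Set ℝ) (hV : V ⊆ Set.Ioo a b) (hVm : MeasurableSet V)
    (ν : Measure ℝ) [SigmaFinite ν]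
    (k : ℝ → ℝ → ℝ) (hkm : Measurable (Function.uncurry k))
    (hknn : ∀ w v : ℝ, 0 ≤ k w v)
    (hk1 : ∀ w ∈ V, ∫ v in V, k w v ∂ν = 1)
    (f ftil : ℝ × ℝ → ℝ)
    (hf : IntegrableOn f ((Set.Ioo (0 : ℝ) 1) ×ˢ V) ((volume : Measure ℝ).prod ν))
    (hext : IsBoundaryExtension b p q k ν V f ftil)
    (t : ℝ) (ht : 0 ≤ t) :
    IntegrableOn (fun z : ℝ × ℝ => ftil (z.1 - t * z.2, z.2))
        ((Set.Ioo (0 : ℝ) 1) ×ˢ V) ((volume : Measure ℝ).prod ν) ∧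
    IsBoundaryExtension b p q k ν V
      (fun z : ℝ × ℝ => ftil (z.1 - t * z.2, z.2))
      (fun z : ℝ × ℝ => ftil (z.1 - t * z.2, z.2)) :=
  stmt6_general a b p q ha hab V hV hVm ν k f ftil hext t ht
end
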